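/- Let G be a graph on n vertices, u, v distinct nonadjacent vertices, and G' = G + uv. Then for all m ≥ max{2, χ_DP(G)}, P_DP(G',m) < P_DP(G,m). -/

import Mathlib

open SimpleGraph

/-- The number of proper `m`-colorings of a graph `G`. -/
noncomputable def numColorings {V : Type} (G : SimpleGraph V) (m : ℕ) : ℕ :=
  Nat.card {c : V → Fin m // ∀ ⦃a b : V⦄, G.Adj a b → c a ≠ c b}

/-- An `m`-fold cover `(L, H)` of a graph `G`. -/
structure DPCover {V : Type} (G : SimpleGraph V) (m : ℕ) where
  X : Type
  H : SimpleGraph X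
  L : V → Set X
  partition : ∀ x : X, ∃! v : V, x ∈ L v
  fold : ∀ v : V, Nat.card (L v) = m
  cliques : ∀ v : V, ∀ x ∈ L v, ∀ y ∈ L v, x ≠ y → H.Adj x y
  cross : ∀ u v : V, ∀ x ∈ L u, ∀ y ∈ L v, H.Adj x y → u = v ∨ G.Adj u v
  matching : ∀ u v : V, G.Adj u v → ∀ x ∈ L u, ∀ y ∈ L v, ∀ z ∈ L v,
      H.Adj x y → H.Adj x z → y = z
  matching' : ∀ u v : V, G.Adj u v → ∀ y ∈ L u, ∀ z ∈ L u, ∀ x ∈ L v,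
      H.Adj y x → H.Adj z x → y = z

/-- A cover is full if for each edge `uv` of `G` the matching between `L u` and `L v`
is a perfect matching. -/
def DPCover.IsFull {V : Type} {G : SimpleGraph V} {m : ℕ} (C : DPCover G m) : Prop :=
  ∀ u v : V, G.Adj u v → ∀ x ∈ C.L u, ∃ y ∈ C.L v, C.H.Adj x y

/-- An `H`-coloring of `G`, viewed as an independent transversal of the lists. -/
def DPCover.IsColoring {V : Type} {G : SimpleGraph V} {m : ℕ} (C : DPCover G m)
    (f : V → C.X) : Prop :=
  (∀ v : V, f v ∈ C.L v) ∧ ∀ u v : V, u ≠ v → ¬ C.H.Adj (f u) (f v)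

/-- `P_DP(G, 𝓗)`, the number of `𝓗`-colorings of `G`. -/
noncomputable def DPCover.count {V : Type} {G : SimpleGraph V} {m : ℕ}
    (C : DPCover G m) : ℕ :=
  Nat.card {f : V → C.X // C.IsColoring f}

/-- The DP color function `P_DP(G, m)`. -/
noncomputable def PDP {V : Type} (G : SimpleGraph V) (m : ℕ) : ℕ :=
  sInf {n : ℕ | ∃ C : DPCover G m, C.count = n}

/-- The DP-chromatic number `χ_DP(G)`. -/
noncomputable def chiDP {V : Type} (G : SimpleGraph V) : ℕ :=
  sInf {m : ℕ | ∀ C : DPCover G m, ∃ f : V → C.X, C.IsColoring f}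

/-- A canonical labeling of an `m`-fold cover. -/
def DPCover.HasCanonicalLabeling {V : Type} {G : SimpleGraph V} {m : ℕ}
    (C : DPCover G m) : Prop :=
  ∃ φ : V × Fin m → C.X, Function.Bijective φ ∧ (∀ v j, φ (v, j) ∈ C.L v) ∧
    ∀ u v : V, G.Adj u v → ∀ j : Fin m, C.H.Adj (φ (u, j)) (φ (v, j))

/-- A graph is 2-connected if it has at least 3 vertices, is connected, and
remains connected after deleting any single vertex. -/
def TwoConnected {V : Type} (G : SimpleGraph V) : Prop :=
  3 ≤ Nat.card V ∧ G.Connected ∧ ∀ v : V, (G.induce ({v}ᶜ : Set V)).Connected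

/-!
Take an `m`-fold cover `𝓗` of `G` with exactly `P_DP(G, m)` colorings. As `m ≥ χ_DP(G)`, it has a
coloring `f`. Adding the single edge `f(u) f(v)` to `𝓗` gives an `m`-fold cover of `G + uv` whose
colorings are colorings of `𝓗` other than `f`, so `P_DP(G + uv, m) < P_DP(G, 𝓗)`.

That every `m`-fold cover is colorable for `m ≥ χ_DP(G)` follows by restricting each list to
`χ_DP(G)` of its elements; the infimum defining `χ_DP(G)` is over a nonempty set because greedy
coloring succeeds with `|V(G)| + 1` colors.
-/

namespace DPCover

variable {V : Type} {G : SimpleGraph V} {m : ℕ} (C : DPCover G m)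

lemma eq_of_mem_L {x : C.X} {a b : V} (ha : x ∈ C.L a) (hb : x ∈ C.L b) : a = b :=
  (C.partition x).unique ha hb

lemma finite_L (hm : 0 < m) (v : V) : (C.L v).Finite :=
  Set.finite_coe_iff.mp (Nat.finite_of_card_ne_zero ((C.fold v).trans_ne hm.ne'))

lemma nonempty_L (hm : 0 < m) (v : V) : (C.L v).Nonempty :=
  Set.nonempty_coe_sort.mp (Nat.card_pos_iff.mp ((C.fold v).symm ▸ hm)).1

lemma finite_X [Finite V] (hm : 0 < m) : Finite C.X := by
  have hcover : (Set.univ : Set C.X) ⊆ ⋃ v, C.L v := fun x _ =>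
    Set.mem_iUnion.mpr (C.partition x).exists
  exact Set.finite_univ_iff.mp ((Set.finite_iUnion (C.finite_L hm)).subset hcover)

lemma eq_of_adj_of_adj {a b : V} (hab : a ≠ b) {x y z : C.X} (hx : x ∈ C.L a)
    (hy : y ∈ C.L b) (hz : z ∈ C.L b) (hxy : C.H.Adj x y) (hxz : C.H.Adj x z) : y = z :=
  (C.cross a b x hx y hy hxy).elim (fun h => absurd h hab)
    fun hG => C.matching a b hG x hx y hy z hz hxy hxz

/-- Greedy: a colored vertex blocks at most one element of the list of a new vertex. -/
lemma exists_partial_coloring [DecidableEq V] (s : Finset V) (hs : s.card < m) :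
    ∃ f : V → C.X, (∀ v, f v ∈ C.L v) ∧ ∀ a ∈ s, ∀ b ∈ s, a ≠ b → ¬ C.H.Adj (f a) (f b) := by
  induction s using Finset.induction_on with
  | empty =>
    choose f hf using C.nonempty_L hs
    exact ⟨f, hf, by simp⟩
  | insert a s ha ih =>
    rw [Finset.card_insert_of_notMem ha] at hs
    obtain ⟨f, hfL, hf⟩ := ih (by omega)
    obtain ⟨x, hxL, hx⟩ : ∃ x ∈ C.L a, ∀ b ∈ s, ¬ C.H.Adj (f b) x := by
      by_contra! hbad
      choose g hgs hg using hbad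
      have hinj : Function.Injective fun x : C.L a => (⟨g x x.2, hgs x x.2⟩ : s) := by
        rintro ⟨x, hx⟩ ⟨y, hy⟩ hxy
        have hgxy : g x hx = g y hy := congrArg Subtype.val hxy
        have hne : g x hx ≠ a := fun h => ha (h ▸ hgs x hx)
        exact Subtype.ext (C.eq_of_adj_of_adj hne (hfL _) hx hy (hg x hx)
          (hgxy ▸ hg y hy))
      have hcard := Nat.card_le_card_of_injective _ hinj
      rw [C.fold, Nat.card_eq_finsetCard] at hcard
      omega
    refine ⟨Function.update f a x, fun w => ?_, ?_⟩
    · rcases eq_or_ne w a with rfl | hw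
      · simpa using hxL
      · simpa [hw] using hfL w
    · intro b hb c hc hbc
      have hne : ∀ w ∈ s, w ≠ a := fun w hw h => ha (h ▸ hw)
      rcases Finset.mem_insert.mp hb with rfl | hbs <;>
        rcases Finset.mem_insert.mp hc with rfl | hcs
      · exact absurd rfl hbc
      · simpa [hne c hcs] using fun h => hx c hcs h.symm
      · simpa [hne b hbs] using hx b hbs
      · simpa [hne b hbs, hne c hcs] using hf b hbs c hcs hbc

lemma exists_coloring_of_card_lt [Fintype V] (h : Fintype.card V < m) :
    ∃ f, C.IsColoring f := by
  classical
  obtain ⟨f, hfL, hf⟩ := C.exists_partial_coloring Finset.univ h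
  exact ⟨f, hfL, fun a b => hf a (Finset.mem_univ a) b (Finset.mem_univ b)⟩

def restrict {k : ℕ} (T : V → Set C.X) (hT : ∀ v, T v ⊆ C.L v)
    (hk : ∀ v, Nat.card (T v) = k) : DPCover G k where
  X := ↥(⋃ v, T v)
  H := C.H.comap Subtype.val
  L v := Subtype.val ⁻¹' T v
  partition x := by
    obtain ⟨v, hv⟩ := Set.mem_iUnion.mp x.2
    exact ⟨v, hv, fun w hw => C.eq_of_mem_L (hT w hw) (hT v hv)⟩
  fold v := by
    rw [Nat.card_preimage_of_injective Subtype.val_injective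
      (by rw [Subtype.range_coe]; exact Set.subset_iUnion T v), hk]
  cliques v x hx y hy hne := C.cliques v x (hT v hx) y (hT v hy) (Subtype.val_injective.ne hne)
  cross a b x hx y hy := C.cross a b x (hT a hx) y (hT b hy)
  matching a b hab x hx y hy z hz hxy hxz :=
    Subtype.val_injective (C.matching a b hab x (hT a hx) y (hT b hy) z (hT b hz) hxy hxz)
  matching' a b hab y hy z hz x hx hyx hzx :=
    Subtype.val_injective (C.matching' a b hab y (hT a hy) z (hT a hz) x (hT b hx) hyx hzx)

lemma exists_coloring_of_le {k : ℕ} (hkm : k ≤ m)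
    (hk : ∀ C : DPCover G k, ∃ f, C.IsColoring f) : ∃ f, C.IsColoring f := by
  have hT : ∀ v, ∃ T ⊆ C.L v, T.ncard = k := fun v =>
    Set.exists_subset_card_eq (by rwa [← Nat.card_coe_set_eq, C.fold])
  choose T hTL hTk using hT
  obtain ⟨f, hfL, hf⟩ := hk (C.restrict T hTL fun v => (Nat.card_coe_set_eq _).trans (hTk v))
  exact ⟨fun v => (f v).1, fun v => hTL v (hfL v), hf⟩

lemma exists_coloring_of_chiDP_le [Fintype V] (hm : chiDP G ≤ m) : ∃ f, C.IsColoring f :=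
  C.exists_coloring_of_le hm (Nat.sInf_mem (s := {k | ∀ C : DPCover G k, ∃ f, C.IsColoring f})
    ⟨Fintype.card V + 1, fun C' => C'.exists_coloring_of_card_lt (Nat.lt_succ_self _)⟩)

variable (G m) in
def disjointCliques : DPCover G m where
  X := V × Fin m
  H := SimpleGraph.fromRel fun p q => p.1 = q.1
  L v := Set.range (Prod.mk v)
  partition p := ⟨p.1, ⟨p.2, rfl⟩, by rintro w ⟨j, rfl⟩; rfl⟩
  fold v := (Nat.card_range_of_injective (Prod.mk_right_injective v)).trans (Nat.card_fin m)
  cliques := by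
    rintro v _ ⟨i, rfl⟩ _ ⟨j, rfl⟩ hne
    exact (fromRel_adj _ _ _).mpr ⟨hne, Or.inl rfl⟩
  cross := by
    rintro a b _ ⟨i, rfl⟩ _ ⟨j, rfl⟩ h
    exact Or.inl (((fromRel_adj _ _ _).mp h).2.elim id Eq.symm)
  matching := by
    rintro a b hab _ ⟨i, rfl⟩ _ ⟨j, rfl⟩ _ - h
    exact absurd (((fromRel_adj _ _ _).mp h).2.elim id Eq.symm) hab.ne
  matching' := by
    rintro a b hab _ ⟨i, rfl⟩ _ - _ ⟨j, rfl⟩ h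
    exact absurd (((fromRel_adj _ _ _).mp h).2.elim id Eq.symm) hab.ne

variable {u v : V} {x y : C.X}

lemma sym2_eq_of_mem_L {a b : V} {p q : C.X} (hp : p ∈ C.L a) (hq : q ∈ C.L b)
    (hx : x ∈ C.L u) (hy : y ∈ C.L v) (h : s(p, q) = s(x, y)) : s(a, b) = s(u, v) := by
  rcases Sym2.eq_iff.mp h with ⟨rfl, rfl⟩ | ⟨rfl, rfl⟩
  · rw [C.eq_of_mem_L hp hx, C.eq_of_mem_L hq hy]
  · rw [C.eq_of_mem_L hp hy, C.eq_of_mem_L hq hx, Sym2.eq_swap]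

lemma adj_of_adj_sup_fromEdgeSet (hx : x ∈ C.L u) (hy : y ∈ C.L v) (hadj : ¬ G.Adj u v)
    {a b : V} (hab : G.Adj a b) {p q : C.X} (hp : p ∈ C.L a) (hq : q ∈ C.L b)
    (h : (C.H ⊔ fromEdgeSet {s(x, y)}).Adj p q) : C.H.Adj p q := by
  rcases h with h | ⟨h, -⟩
  · exact h
  · rw [← mem_edgeSet, C.sym2_eq_of_mem_L hp hq hx hy h] at hab
    exact absurd hab hadj

lemma sym2_eq_of_adj_sup_fromEdgeSet {a b : V} (hab : a ≠ b) (hG : ¬ G.Adj a b) {p q : C.X}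
    (hp : p ∈ C.L a) (hq : q ∈ C.L b) (h : (C.H ⊔ fromEdgeSet {s(x, y)}).Adj p q) :
    s(p, q) = s(x, y) := by
  rcases h with h | ⟨h, -⟩
  · exact ((C.cross a b p hp q hq h).resolve_left hab |> hG).elim
  · exact h

lemma eq_of_adj_sup_fromEdgeSet (hx : x ∈ C.L u) (hy : y ∈ C.L v) (hadj : ¬ G.Adj u v)
    {a b : V} (hab : (G ⊔ fromEdgeSet {s(u, v)}).Adj a b) {p q r : C.X} (hp : p ∈ C.L a)
    (hq : q ∈ C.L b) (hr : r ∈ C.L b) (hpq : (C.H ⊔ fromEdgeSet {s(x, y)}).Adj p q)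
    (hpr : (C.H ⊔ fromEdgeSet {s(x, y)}).Adj p r) : q = r := by
  by_cases hG : G.Adj a b
  · exact C.matching a b hG p hp q hq r hr (C.adj_of_adj_sup_fromEdgeSet hx hy hadj hG hp hq hpq)
      (C.adj_of_adj_sup_fromEdgeSet hx hy hadj hG hp hr hpr)
  · exact Sym2.congr_right.mp ((C.sym2_eq_of_adj_sup_fromEdgeSet hab.ne hG hp hq hpq).trans
      (C.sym2_eq_of_adj_sup_fromEdgeSet hab.ne hG hp hr hpr).symm)

def addEdge (hx : x ∈ C.L u) (hy : y ∈ C.L v) (hadj : ¬ G.Adj u v) :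
    DPCover (G ⊔ fromEdgeSet {s(u, v)}) m where
  X := C.X
  H := C.H ⊔ fromEdgeSet {s(x, y)}
  L := C.L
  partition := C.partition
  fold := C.fold
  cliques w p hp q hq hne := Or.inl (C.cliques w p hp q hq hne)
  cross a b p hp q hq h := by
    rcases h with h | ⟨h, -⟩
    · exact (C.cross a b p hp q hq h).imp_right Or.inl
    · by_cases hab : a = b
      · exact Or.inl hab
      · exact Or.inr (Or.inr ⟨C.sym2_eq_of_mem_L hp hq hx hy h, hab⟩)
  matching a b hab p hp q hq r hr := C.eq_of_adj_sup_fromEdgeSet hx hy hadj hab hp hq hr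
  matching' a b hab q hq r hr p hp hqp hrp :=
    C.eq_of_adj_sup_fromEdgeSet hx hy hadj hab.symm hp hq hr hqp.symm hrp.symm

lemma IsColoring.of_addEdge {hx : x ∈ C.L u} {hy : y ∈ C.L v} {hadj : ¬ G.Adj u v}
    {g : V → C.X} (hg : (C.addEdge hx hy hadj).IsColoring g) : C.IsColoring g :=
  ⟨hg.1, fun a b hab h => hg.2 a b hab (Or.inl h)⟩

lemma count_addEdge_lt [Finite V] (hm : 0 < m) {f : V → C.X} (hf : C.IsColoring f)
    (huv : u ≠ v) (hadj : ¬ G.Adj u v) : (C.addEdge (hf.1 u) (hf.1 v) hadj).count < C.count := by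
  have := C.finite_X hm
  have hf' : ¬ (C.addEdge (hf.1 u) (hf.1 v) hadj).IsColoring f := fun h =>
    h.2 u v huv (Or.inr ⟨rfl, fun heq => huv (C.eq_of_mem_L (heq ▸ hf.1 u) (hf.1 v))⟩)
  calc (C.addEdge (hf.1 u) (hf.1 v) hadj).count
      = Nat.card {g : {g // C.IsColoring g} // (C.addEdge (hf.1 u) (hf.1 v) hadj).IsColoring g.1} :=
        (Nat.card_congr (Equiv.subtypeSubtypeEquivSubtype fun h => h.of_addEdge)).symm
    _ < C.count := Finite.card_subtype_lt (x := ⟨f, hf⟩) hf'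

end DPCover

lemma exists_count_eq_PDP {V : Type} (G : SimpleGraph V) (m : ℕ) :
    ∃ C : DPCover G m, C.count = PDP G m :=
  Nat.sInf_mem (s := {n | ∃ C : DPCover G m, C.count = n})
    ⟨_, DPCover.disjointCliques G m, rfl⟩

lemma PDP_le_count {V : Type} {G : SimpleGraph V} {m : ℕ} (C : DPCover G m) :
    PDP G m ≤ C.count :=
  Nat.sInf_le ⟨C, rfl⟩

theorem stmt_11 {V : Type} [Fintype V] (G : SimpleGraph V) (u v : V)
    (huv : u ≠ v) (hadj : ¬ G.Adj u v) (m : ℕ) (hm : max 2 (chiDP G) ≤ m) :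
    PDP (G ⊔ SimpleGraph.fromEdgeSet {s(u, v)}) m < PDP G m := by
  obtain ⟨C, hC⟩ := exists_count_eq_PDP G m
  obtain ⟨f, hf⟩ := C.exists_coloring_of_chiDP_le (le_of_max_le_right hm)
  calc PDP (G ⊔ SimpleGraph.fromEdgeSet {s(u, v)}) m
      ≤ (C.addEdge (hf.1 u) (hf.1 v) hadj).count := PDP_le_count _
    _ < C.count := C.count_addEdge_lt (two_pos.trans_le (le_of_max_le_left hm)) hf huv hadj
    _ = PDP G m := hC
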